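/- arXiv:1002.1227 — 4 statements merged into one kernel-verified Lean document; each statement's English description precedes it below -/
import Mathlib

section
/- For every finite connected simple graph G = (V,E) and every spin configuration σ on G, there exists a finite family B₁, …, B_N of pairwise disjoint borders of G whose union is exactly the disagreement edge set D(σ). -/
/-!
Orient each disagreement edge `s(u, v)` so that `σ u = 1` and `σ v = -1`, let `A` be the
cluster of `u` (its component in the graph of agreeing edges) and `K` the component of `v` in
`G - A`. The edges leaving `K` form a border: `K` is connected, and so is its complement, which
is `A` together with the other components of `G - A`, each attached to `A`. Every edge leaving
`K` ends in `A` and is a disagreement edge. Two such borders sharing an edge `s(i, j)` with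
`σ i = -1`, `σ j = 1` coincide, because `A` is then the cluster of `j` and `K` the component of
`i` in `G - A`. Hence the distinct borders obtained this way partition `D(σ)`.
-/

open scoped BigOperators Classical

namespace PG

variable {V : Type*}

/-- The product of the spins at the two endpoints of an unordered pair. -/
def spinProd (σ : V → ℤ) : Sym2 V → ℤ :=
  Sym2.lift ⟨fun i j => σ i * σ j, fun i j => mul_comm (σ i) (σ j)⟩

/-- The spins at the two endpoints of an unordered pair disagree. -/
def Disagrees (σ : V → ℤ) : Sym2 V → Prop :=
  Sym2.lift ⟨fun i j => σ i ≠ σ j, fun i j => propext ne_comm⟩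

/-- The disagreement edge set D(σ) of a spin configuration. -/
def disagreeSet (G : SimpleGraph V) (σ : V → ℤ) : Set (Sym2 V) :=
  {e | e ∈ G.edgeSet ∧ Disagrees σ e}

/-- A spin configuration takes values ±1. -/
def IsSpin (σ : V → ℤ) : Prop := ∀ v, σ v = 1 ∨ σ v = -1

/-- `B` is a border of `G` with sides `P₁`, `P₂`. -/
structure IsBorderWith (G : SimpleGraph V) (B : Set (Sym2 V)) (P₁ P₂ : Set V) : Prop where
  disj : Disjoint P₁ P₂
  cover : P₁ ∪ P₂ = Set.univ
  ne₁ : P₁.Nonempty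
  ne₂ : P₂.Nonempty
  conn₁ : (G.induce P₁).Connected
  conn₂ : (G.induce P₂).Connected
  eq_edges : B = {e | e ∈ G.edgeSet ∧ ∃ i ∈ P₁, ∃ j ∈ P₂, e = s(i, j)}

/-- `B` is a border of `G`. -/
def IsBorder (G : SimpleGraph V) (B : Set (Sym2 V)) : Prop :=
  ∃ P₁ P₂ : Set V, IsBorderWith G B P₁ P₂

/-- `p` is internal to the border `B`: it lies on the side with no more vertices. -/
def InternalTo (G : SimpleGraph V) (p : V) (B : Set (Sym2 V)) : Prop :=
  ∃ P₁ P₂ : Set V, IsBorderWith G B P₁ P₂ ∧ p ∈ P₁ ∧ P₁.ncard ≤ P₂.ncard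

/-- μ^p(b): the number of borders of cardinality `b` to which `p` is internal. -/
noncomputable def mu (G : SimpleGraph V) (p : V) (b : ℕ) : ℕ :=
  {B : Finset (Sym2 V) | B.card = b ∧ InternalTo G p ↑B}.ncard

/-- The vertex border of `B` on side `P`: endpoints of edges of `B` lying in `P`. -/
def vertexBorder (B : Set (Sym2 V)) (P : Set V) : Set V :=
  {v | v ∈ P ∧ ∃ e ∈ B, v ∈ e}

/-- Encoding of spin configurations by boolean functions. -/
def toSpin (τ : V → Bool) : V → ℤ := fun v => if τ v then 1 else -1

/-- The zero-field Ising Hamiltonian. -/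
noncomputable def hamiltonian [Fintype V] (G : SimpleGraph V) [Fintype G.edgeSet]
    (J : Sym2 V → ℝ) (σ : V → ℤ) : ℝ :=
  -∑ e ∈ G.edgeFinset, J e * (spinProd σ e : ℝ)

/-- The partition function Z at inverse temperature β. -/
noncomputable def partitionZ [Fintype V] [DecidableEq V] (G : SimpleGraph V)
    [Fintype G.edgeSet] (J : Sym2 V → ℝ) (β : ℝ) : ℝ :=
  ∑ τ : V → Bool, Real.exp (-β * hamiltonian G J (toSpin τ))

/-- Gibbs expectation of an observable `f` at inverse temperature β. -/
noncomputable def gibbsExp [Fintype V] [DecidableEq V] (G : SimpleGraph V)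
    [Fintype G.edgeSet] (J : Sym2 V → ℝ) (β : ℝ) (f : (V → ℤ) → ℝ) : ℝ :=
  (∑ τ : V → Bool, f (toSpin τ) * Real.exp (-β * hamiltonian G J (toSpin τ))) /
    partitionZ G J β

/-- Gibbs probability of an event `S` at inverse temperature β. -/
noncomputable def gibbsProb [Fintype V] [DecidableEq V] (G : SimpleGraph V)
    [Fintype G.edgeSet] (J : Sym2 V → ℝ) (β : ℝ) (S : (V → ℤ) → Prop) : ℝ :=
  gibbsExp G J β (fun σ => if S σ then 1 else 0)

/-- The magnetization M(σ). -/
noncomputable def magn [Fintype V] (σ : V → ℤ) : ℝ :=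
  (∑ i, (σ i : ℝ)) / (Fintype.card V : ℝ)

/-- The external vertex boundary of a set of vertices. -/
def extBoundary (G : SimpleGraph V) (A : Set V) : Set V :=
  {v | v ∉ A ∧ ∃ a ∈ A, G.Adj v a}

/-- A (C,d)-isoperimetric inequality. -/
def IsoIneq (G : SimpleGraph V) (C d : ℝ) : Prop :=
  ∀ A : Set V, A.Finite → A.Nonempty → A ≠ Set.univ →
    (extBoundary G A).Infinite ∨
      C * (A.ncard : ℝ) ^ ((d - 1) / d) ≤ ((extBoundary G A).ncard : ℝ)

/-- `G` has growth exponent `df`: balls of radius `r ≥ 1` contain at most `r^df` vertices. -/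
def HasGrowth (G : SimpleGraph V) (df : ℝ) : Prop :=
  ∀ p : V, ∀ r : ℕ, 1 ≤ r → (({q : V | G.dist p q ≤ r}).ncard : ℝ) ≤ (r : ℝ) ^ df

/-- ν_q(b): the number of vertex sets containing `q` arising as a vertex border of a
border of cardinality `b`. -/
noncomputable def nu (G : SimpleGraph V) (q : V) (b : ℕ) : ℕ :=
  {S : Set V | q ∈ S ∧ ∃ (B : Finset (Sym2 V)) (P₁ P₂ : Set V),
    IsBorderWith G ↑B P₁ P₂ ∧ B.card = b ∧ S = vertexBorder ↑B P₂}.ncard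

lemma exists_fin_enum_of_pairwiseDisjoint {α : Type*} {𝔅 : Set (Set α)} [Finite 𝔅]
    (h𝔅 : 𝔅.PairwiseDisjoint id) :
    ∃ (N : ℕ) (f : Fin N → Set α), (∀ i, f i ∈ 𝔅) ∧
      (∀ i j, i ≠ j → Disjoint (f i) (f j)) ∧ ⋃ i, f i = ⋃₀ 𝔅 := by
  obtain ⟨N, ⟨e⟩⟩ := Finite.exists_equiv_fin 𝔅
  refine ⟨N, fun i => e.symm i, fun i => (e.symm i).2, fun i j hij => ?_, ?_⟩
  · exact h𝔅 (e.symm i).2 (e.symm j).2 fun heq => hij (e.symm.injective (Subtype.ext heq))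
  · rw [Set.sUnion_eq_iUnion]
    exact e.symm.surjective.iUnion_comp fun B : 𝔅 => (B : Set α)

section Graph

variable {G H : SimpleGraph V}

/-- `G.induce s` as a graph on all of `V`, so that its components are subsets of `V`. -/
def restrict (G : SimpleGraph V) (s : Set V) : SimpleGraph V where
  Adj x y := G.Adj x y ∧ x ∈ s ∧ y ∈ s
  symm := ⟨fun _ _ ⟨h, hx, hy⟩ => ⟨h.symm, hy, hx⟩⟩
  loopless := ⟨fun x ⟨h, _⟩ => G.loopless.irrefl x h⟩

lemma restrict_le (s : Set V) : restrict G s ≤ G := fun _ _ h => h.1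

lemma mem_of_reachable_restrict {s : Set V} {x y : V} (h : (restrict G s).Reachable x y)
    (hy : y ∈ s) : x ∈ s := by
  obtain ⟨p⟩ := h
  cases p with
  | nil => exact hy
  | cons h _ => exact h.2.1

def componentAvoiding (G : SimpleGraph V) (A : Set V) (v : V) : Set V :=
  ((restrict G Aᶜ).connectedComponentMk v).supp

def cut (G : SimpleGraph V) (P : Set V) : Set (Sym2 V) :=
  {e | e ∈ G.edgeSet ∧ ∃ i ∈ P, ∃ j ∈ Pᶜ, e = s(i, j)}

lemma connected_induce_supp_of_le (hle : H ≤ G) (C : H.ConnectedComponent) :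
    (G.induce C.supp).Connected :=
  C.maximal_connected_induce_supp.1.mono fun _ _ h => hle h

/-- A walk from a vertex of `s` to `A` stays in `s` until it first meets `A`. -/
lemma connected_induce_of_adj_mem (hG : G.Preconnected) {A s : Set V}
    (hA : (G.induce A).Connected) (hAs : A ⊆ s)
    (hclosed : ∀ ⦃x y⦄, x ∈ s → x ∉ A → G.Adj x y → y ∈ s) :
    (G.induce s).Connected := by
  obtain ⟨⟨a, ha⟩⟩ := hA.nonempty
  have reach : ∀ {x b : V} (p : G.Walk x b), b = a → ∀ hx : x ∈ s,
      (G.induce s).Reachable ⟨x, hx⟩ ⟨a, hAs ha⟩ := by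
    intro x b p
    induction p with
    | nil =>
      rintro rfl hx
      rfl
    | @cons x y b hxy _ ih =>
      intro hb hx
      by_cases hxA : x ∈ A
      · exact (hA.preconnected ⟨x, hxA⟩ ⟨a, ha⟩).map (G.induceHomOfLE hAs).toHom
      · have hy := hclosed hx hxA hxy
        exact (SimpleGraph.Adj.reachable (G := G.induce s) (u := ⟨x, hx⟩) (v := ⟨y, hy⟩)
          hxy).trans (ih hb hy)
  rw [SimpleGraph.connected_iff_exists_forall_reachable]
  exact ⟨⟨a, hAs ha⟩, fun ⟨x, hx⟩ => (reach (hG x a).some rfl hx).symm⟩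

lemma isBorderWith_cut {P : Set V} (hP : (G.induce P).Connected)
    (hPc : (G.induce Pᶜ).Connected) :
    IsBorderWith G (cut G P) P Pᶜ :=
  ⟨disjoint_compl_right, Set.union_compl_self P, hP.nonempty.elim fun x => ⟨x, x.2⟩,
    hPc.nonempty.elim fun x => ⟨x, x.2⟩, hP, hPc, rfl⟩

section Avoiding

variable {A : Set V} {v : V}

lemma componentAvoiding_subset_compl (hv : v ∉ A) : componentAvoiding G A v ⊆ Aᶜ :=
  fun _ hw => mem_of_reachable_restrict (SimpleGraph.ConnectedComponent.exact hw) hv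

lemma mem_componentAvoiding_of_adj (hv : v ∉ A) {i j : V} (hi : i ∈ componentAvoiding G A v)
    (hij : G.Adj i j) (hj : j ∉ A) : j ∈ componentAvoiding G A v :=
  (SimpleGraph.ConnectedComponent.mem_supp_congr_adj _
    (show (restrict G Aᶜ).Adj i j from ⟨hij, componentAvoiding_subset_compl hv hi, hj⟩)).1 hi

lemma mem_of_adj_mem_componentAvoiding (hv : v ∉ A) {i j : V}
    (hi : i ∈ componentAvoiding G A v) (hij : G.Adj i j) (hj : j ∉ componentAvoiding G A v) :
    j ∈ A := by
  by_contra hjA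
  exact hj (mem_componentAvoiding_of_adj hv hi hij hjA)

lemma exists_of_mem_cut_componentAvoiding (hv : v ∉ A) {e : Sym2 V}
    (he : e ∈ cut G (componentAvoiding G A v)) :
    ∃ i ∈ componentAvoiding G A v, ∃ j ∈ A, G.Adj i j ∧ e = s(i, j) := by
  obtain ⟨he, i, hi, j, hj, rfl⟩ := he
  exact ⟨i, hi, j, mem_of_adj_mem_componentAvoiding hv hi he hj, he, rfl⟩

lemma isBorderWith_cut_componentAvoiding (hG : G.Preconnected) (hA : (G.induce A).Connected)
    (hv : v ∉ A) :
    IsBorderWith G (cut G (componentAvoiding G A v)) (componentAvoiding G A v)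
      (componentAvoiding G A v)ᶜ := by
  refine isBorderWith_cut (connected_induce_supp_of_le (restrict_le _) _)
    (connected_induce_of_adj_mem hG hA (fun a ha haK => componentAvoiding_subset_compl hv haK ha)
      fun x y hx hxA hxy hy => hx (mem_componentAvoiding_of_adj hv hy hxy.symm hxA))

end Avoiding

end Graph

section Spin

variable {G : SimpleGraph V} {σ : V → ℤ}

def agreeGraph (G : SimpleGraph V) (σ : V → ℤ) : SimpleGraph V where
  Adj x y := G.Adj x y ∧ σ x = σ y
  symm := ⟨fun _ _ ⟨h, hs⟩ => ⟨h.symm, hs.symm⟩⟩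
  loopless := ⟨fun x ⟨h, _⟩ => G.loopless.irrefl x h⟩

lemma agreeGraph_le : agreeGraph G σ ≤ G := fun _ _ h => h.1

def cluster (G : SimpleGraph V) (σ : V → ℤ) (u : V) : Set V :=
  ((agreeGraph G σ).connectedComponentMk u).supp

def clusterBorder (G : SimpleGraph V) (σ : V → ℤ) (u v : V) : Set (Sym2 V) :=
  cut G (componentAvoiding G (cluster G σ u) v)

lemma spin_eq_of_mem_cluster {u w : V} (hw : w ∈ cluster G σ u) : σ w = σ u := by
  obtain ⟨p⟩ := SimpleGraph.ConnectedComponent.exact hw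
  clear hw
  induction p with
  | nil => rfl
  | cons h _ ih => exact h.2.trans ih

lemma mem_cluster_of_adj {u i j : V} (hj : j ∈ cluster G σ u) (hji : G.Adj j i)
    (hσ : σ j = σ i) : i ∈ cluster G σ u :=
  (SimpleGraph.ConnectedComponent.mem_supp_congr_adj _
    (show (agreeGraph G σ).Adj j i from ⟨hji, hσ⟩)).1 hj

section Pair

variable {u v : V} (huv : σ u ≠ σ v)
include huv

lemma not_mem_cluster : v ∉ cluster G σ u :=
  fun hv => huv (spin_eq_of_mem_cluster hv).symm

lemma isBorder_clusterBorder (hG : G.Connected) : IsBorder G (clusterBorder G σ u v) :=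
  ⟨_, _, isBorderWith_cut_componentAvoiding hG.preconnected
    (connected_induce_supp_of_le agreeGraph_le _) (not_mem_cluster huv)⟩

lemma exists_of_mem_clusterBorder {e : Sym2 V} (he : e ∈ clusterBorder G σ u v) :
    ∃ i ∈ componentAvoiding G (cluster G σ u) v, ∃ j ∈ cluster G σ u,
      G.Adj i j ∧ σ i ≠ σ j ∧ e = s(i, j) := by
  obtain ⟨i, hi, j, hj, hij, rfl⟩ :=
    exists_of_mem_cut_componentAvoiding (not_mem_cluster huv) he
  refine ⟨i, hi, j, hj, hij, fun hσ => ?_, rfl⟩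
  exact componentAvoiding_subset_compl (not_mem_cluster huv) hi
    (mem_cluster_of_adj hj hij.symm hσ.symm)

lemma clusterBorder_subset_disagreeSet : clusterBorder G σ u v ⊆ disagreeSet G σ := by
  intro e he
  obtain ⟨i, -, j, -, hij, hσ, rfl⟩ := exists_of_mem_clusterBorder huv he
  exact ⟨hij, hσ⟩

lemma mk_mem_clusterBorder (hadj : G.Adj u v) : s(u, v) ∈ clusterBorder G σ u v :=
  ⟨hadj, v, SimpleGraph.ConnectedComponent.connectedComponentMk_mem, u,
    fun hu => componentAvoiding_subset_compl (not_mem_cluster huv) hu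
      SimpleGraph.ConnectedComponent.connectedComponentMk_mem, Sym2.eq_swap⟩

end Pair

/-- With `±1` spins, the orientation of a shared edge from `-1` to `+1` recovers both the
cluster and the component that define the border. -/
lemma clusterBorder_eq_of_mem (hσ : IsSpin σ) {u v u' v' : V} (hu : σ u = 1) (hv : σ v = -1)
    (hu' : σ u' = 1) (hv' : σ v' = -1) {e : Sym2 V} (he : e ∈ clusterBorder G σ u v)
    (he' : e ∈ clusterBorder G σ u' v') :
    clusterBorder G σ u v = clusterBorder G σ u' v' := by
  obtain ⟨i, hi, j, hj, -, hσij, rfl⟩ :=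
    exists_of_mem_clusterBorder (by rw [hu, hv]; decide) he
  obtain ⟨i', hi', j', hj', -, -, heq⟩ :=
    exists_of_mem_clusterBorder (by rw [hu', hv']; decide) he'
  have hσj : σ j = 1 := (spin_eq_of_mem_cluster hj).trans hu
  have hσj' : σ j' = 1 := (spin_eq_of_mem_cluster hj').trans hu'
  have hσi : σ i = -1 := (hσ i).resolve_left fun h => hσij (h.trans hσj.symm)
  obtain ⟨rfl, rfl⟩ : i = i' ∧ j = j' := by
    rcases Sym2.eq_iff.1 heq with h | ⟨rfl, -⟩
    · exact h
    · exact absurd (hσi.symm.trans hσj') (by decide)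
  have hA : cluster G σ u = cluster G σ u' :=
    congrArg SimpleGraph.ConnectedComponent.supp (hj.symm.trans hj')
  rw [hA] at hi
  rw [clusterBorder, clusterBorder, hA]
  exact congrArg (cut G) (congrArg SimpleGraph.ConnectedComponent.supp (hi.symm.trans hi'))

lemma exists_clusterBorder_of_mem_disagreeSet (hσ : IsSpin σ) {e : Sym2 V}
    (he : e ∈ disagreeSet G σ) :
    ∃ u v, σ u = 1 ∧ σ v = -1 ∧ e ∈ clusterBorder G σ u v := by
  induction e using Sym2.ind with
  | _ a b =>
    obtain ⟨hab, hne⟩ : G.Adj a b ∧ σ a ≠ σ b := he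
    rcases hσ a with ha | ha <;> rcases hσ b with hb | hb
    · exact absurd (ha.trans hb.symm) hne
    · exact ⟨a, b, ha, hb, mk_mem_clusterBorder hne hab⟩
    · exact ⟨b, a, hb, ha, Sym2.eq_swap ▸ mk_mem_clusterBorder hne.symm hab.symm⟩
    · exact absurd (ha.trans hb.symm) hne

def spinBorders (G : SimpleGraph V) (σ : V → ℤ) : Set (Set (Sym2 V)) :=
  {B | ∃ u v, σ u = 1 ∧ σ v = -1 ∧ B = clusterBorder G σ u v}

lemma isBorder_of_mem_spinBorders (hG : G.Connected) {B : Set (Sym2 V)}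
    (hB : B ∈ spinBorders G σ) : IsBorder G B := by
  obtain ⟨u, v, hu, hv, rfl⟩ := hB
  exact isBorder_clusterBorder (by rw [hu, hv]; decide) hG

lemma pairwiseDisjoint_spinBorders (hσ : IsSpin σ) : (spinBorders G σ).PairwiseDisjoint id := by
  rintro _ ⟨u, v, hu, hv, rfl⟩ _ ⟨u', v', hu', hv', rfl⟩ hne
  exact Set.disjoint_left.2 fun e he he' => hne (clusterBorder_eq_of_mem hσ hu hv hu' hv' he he')

lemma sUnion_spinBorders (hσ : IsSpin σ) : ⋃₀ spinBorders G σ = disagreeSet G σ := by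
  refine Set.Subset.antisymm (Set.sUnion_subset ?_) fun e he => ?_
  · rintro _ ⟨u, v, hu, hv, rfl⟩
    exact clusterBorder_subset_disagreeSet (by rw [hu, hv]; decide)
  · obtain ⟨u, v, hu, hv, heB⟩ := exists_clusterBorder_of_mem_disagreeSet hσ he
    exact ⟨_, ⟨u, v, hu, hv, rfl⟩, heB⟩

end Spin

/-- the disagreement edge set of any spin configuration is the union of a
finite family of pairwise disjoint borders. -/
theorem stmt_1 {V : Type*} [Fintype V] (G : SimpleGraph V) (hG : G.Connected)
    (σ : V → ℤ) (hσ : IsSpin σ) :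
    ∃ (N : ℕ) (Bf : Fin N → Set (Sym2 V)),
      (∀ i, IsBorder G (Bf i)) ∧
      (∀ i j, i ≠ j → Disjoint (Bf i) (Bf j)) ∧
      (⋃ i, Bf i) = disagreeSet G σ := by
  obtain ⟨N, Bf, hmem, hdisj, hunion⟩ :=
    exists_fin_enum_of_pairwiseDisjoint (pairwiseDisjoint_spinBorders (G := G) hσ)
  exact ⟨N, Bf, fun i => isBorder_of_mem_spinBorders hG (hmem i), hdisj,
    hunion.trans (sUnion_spinBorders hσ)⟩

end PG
end

section
/- Let G = (V,E) be a finite connected simple graph, p ∈ V, and let B₁, …, B_N be pairwise disjoint borders of G. Define the spin configuration σ by σ(q) = +1 if the number of indices i ∈ {1,…,N} such that q and p lie in different sides of B_i is even, and σ(q) = −1 otherwise. Then the disagreement edge set of σ is exactly B₁ ∪ … ∪ B_N. -/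
/-!
Let `S q` be the set of borders separating `q` from `p`, so that `σ q = (-1) ^ |S q|`. For an
edge `uv`, `S u ∆ S v` is the set of borders separating `u` from `v`, i.e. the borders containing
`uv`; by disjointness it has at most one element. Since `|S u| + |S v| ≡ |S u ∆ S v| (mod 2)`,
the spins at `u` and `v` disagree exactly when `uv` lies in some border.
-/

open scoped BigOperators Classical

namespace PG

variable {V : Type*}

open scoped symmDiff

theorem _root_.Set.ncard_add_ncard_eq_ncard_symmDiff_add {α : Type*} (s t : Set α)
    (hs : s.Finite := by toFinite_tac) (ht : t.Finite := by toFinite_tac) :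
    s.ncard + t.ncard = (s ∆ t).ncard + 2 * (s ∩ t).ncard := by
  rw [Set.symmDiff_def, Set.ncard_union_eq disjoint_sdiff_sdiff hs.sdiff ht.sdiff,
    ← Set.ncard_inter_add_ncard_sdiff_eq_ncard s t hs,
    ← Set.ncard_inter_add_ncard_sdiff_eq_ncard t s ht, Set.inter_comm t s]
  ring

theorem _root_.Set.Subsingleton.even_ncard_iff {α : Type*} {s : Set α} (hs : s.Subsingleton) :
    Even s.ncard ↔ s = ∅ := by
  rcases hs.eq_empty_or_singleton with rfl | ⟨a, rfl⟩ <;> simp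

theorem _root_.ite_one_neg_one_eq_iff {a b : Prop} [Decidable a] [Decidable b] :
    ((if a then (1 : ℤ) else -1) = if b then 1 else -1) ↔ (a ↔ b) := by
  by_cases a <;> by_cases b <;> simp_all

section Separators

variable {ι α : Type*} (A : ι → Set α)

def separators (u v : α) : Set ι := {i | ¬(u ∈ A i ↔ v ∈ A i)}

theorem separators_symmDiff (u v p : α) :
    separators A u p ∆ separators A v p = separators A u v := by
  ext i
  simp only [separators, Set.mem_symmDiff, Set.mem_ofPred_eq]
  tauto

theorem even_ncard_separators_iff [Finite ι] (u v p : α) :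
    (Even (separators A u p).ncard ↔ Even (separators A v p).ncard) ↔
      Even (separators A u v).ncard := by
  rw [← Nat.even_add, Set.ncard_add_ncard_eq_ncard_symmDiff_add, separators_symmDiff,
    Nat.even_add, iff_true_intro (even_two_mul _), iff_true]

end Separators

namespace IsBorderWith

variable {G : SimpleGraph V} {B : Set (Sym2 V)} {P₁ P₂ : Set V}

theorem mem_right_iff (h : IsBorderWith G B P₁ P₂) {v : V} : v ∈ P₂ ↔ v ∉ P₁ := by
  refine ⟨fun h₂ h₁ => Set.disjoint_left.mp h.disj h₁ h₂, fun h₁ => ?_⟩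
  have hv : v ∈ P₁ ∪ P₂ := h.cover ▸ Set.mem_univ v
  exact hv.resolve_left h₁

theorem mk_mem_iff (h : IsBorderWith G B P₁ P₂) {u v : V} :
    s(u, v) ∈ B ↔ G.Adj u v ∧ ¬(u ∈ P₁ ↔ v ∈ P₁) := by
  rw [h.eq_edges]
  simp only [Set.mem_ofPred_eq, SimpleGraph.mem_edgeSet, Sym2.eq_iff, h.mem_right_iff]
  constructor
  · rintro ⟨hadj, a, ha, b, hb, ⟨rfl, rfl⟩ | ⟨rfl, rfl⟩⟩ <;> tauto
  · rintro ⟨hadj, huv⟩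
    refine ⟨hadj, ?_⟩
    by_cases hu : u ∈ P₁
    · exact ⟨u, hu, v, by tauto, Or.inl ⟨rfl, rfl⟩⟩
    · exact ⟨v, by tauto, u, hu, Or.inr ⟨rfl, rfl⟩⟩

theorem subset_edgeSet (h : IsBorderWith G B P₁ P₂) : B ⊆ G.edgeSet := by
  rw [h.eq_edges]
  exact fun _ he => he.1

end IsBorderWith

theorem stmt_2_general {V : Type*} (G : SimpleGraph V)
    (p : V) (N : ℕ) (Bf : Fin N → Set (Sym2 V)) (P₁ P₂ : Fin N → Set V)
    (hB : ∀ i, IsBorderWith G (Bf i) (P₁ i) (P₂ i))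
    (hdisj : ∀ i j, i ≠ j → Disjoint (Bf i) (Bf j))
    (σ : V → ℤ)
    (hσ : ∀ q, σ q =
      if Even ({i : Fin N | ¬ (q ∈ P₁ i ↔ p ∈ P₁ i)}.ncard) then 1 else -1) :
    disagreeSet G σ = ⋃ i, Bf i := by
  have hspin : ∀ u v, σ u = σ v ↔ Even (separators P₁ u v).ncard := by
    intro u v
    rw [← even_ncard_separators_iff P₁ u v p, hσ u, hσ v]
    exact ite_one_neg_one_eq_iff
  ext e
  induction e using Sym2.ind with | _ u v => ?_
  by_cases hadj : G.Adj u v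
  · have hsep : separators P₁ u v = {i | s(u, v) ∈ Bf i} := by
      ext i
      simp [separators, (hB i).mk_mem_iff, hadj]
    have hsub : (separators P₁ u v).Subsingleton := by
      rw [hsep]
      intro i hi j hj
      by_contra hij
      exact Set.disjoint_left.mp (hdisj i j hij) hi hj
    simp only [disagreeSet, Disagrees, Sym2.lift_mk, Set.mem_ofPred_eq, SimpleGraph.mem_edgeSet,
      hadj, true_and, Set.mem_iUnion]
    rw [ne_eq, hspin, hsub.even_ncard_iff, hsep]
    exact Set.nonempty_iff_ne_empty.symm
  · have hnot : ∀ i, s(u, v) ∉ Bf i := fun i hi => hadj ((hB i).subset_edgeSet hi)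
    simp [disagreeSet, hadj, hnot]

/-- given pairwise disjoint borders `B₁,…,B_N` and a base vertex `p`, the
configuration assigning `+1` to `q` iff `q` is separated from `p` by an even number of
the borders has disagreement edge set exactly `B₁ ∪ … ∪ B_N`. -/
theorem stmt_2 {V : Type*} [Fintype V] (G : SimpleGraph V) (hG : G.Connected)
    (p : V) (N : ℕ) (Bf : Fin N → Set (Sym2 V)) (P₁ P₂ : Fin N → Set V)
    (hB : ∀ i, IsBorderWith G (Bf i) (P₁ i) (P₂ i))
    (hdisj : ∀ i j, i ≠ j → Disjoint (Bf i) (Bf j))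
    (σ : V → ℤ)
    (hσ : ∀ q, σ q =
      if Even ({i : Fin N | ¬ (q ∈ P₁ i ↔ p ∈ P₁ i)}.ncard) then 1 else -1) :
    disagreeSet G σ = ⋃ i, Bf i :=
  stmt_2_general G p N Bf P₁ P₂ hB hdisj σ hσ

end PG
end

section
/- Let G = (V,E) be a connected simple graph, p ∈ V, and let B and B′ be borders of G with sides P₁ ∋ p, P₂ and P₁′ ∋ p, P₂′ respectively. If the vertex border of B opposite to p equals the vertex border of B′ opposite to p, then P₁ = P₁′ and B = B′; in fact P₁ is exactly the connected component of p in the graph obtained from G by deleting the vertices of this common vertex border S. (A border is uniquely determined, given p, by its vertex border on the side not containing p.) -/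
/-!
Delete the vertex border `S` of `B` opposite to `p`. The side `P₁` of `p` misses `S` and is
connected, so it lies in the component of `p` in `G - S`; conversely, an edge of `G - S` leaving
`P₁` would be an edge of `B` whose endpoint outside `P₁` belongs to `S`, so `P₁` is closed under
adjacency in `G - S` and is the whole component. Hence `P₁` is determined by `p` and `S`, and so
are `P₂ = P₁ᶜ` and `B`, the set of edges between them.
-/

open scoped BigOperators Classical

namespace PG

variable {V : Type*}

theorem _root_.SimpleGraph.Reachable.mem_of_adj_closed {W : Type*} {H : SimpleGraph W}
    {P : Set W} (hP : ∀ ⦃a b⦄, H.Adj a b → a ∈ P → b ∈ P) {x y : W} (h : H.Reachable x y)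
    (hx : x ∈ P) : y ∈ P := by
  rw [SimpleGraph.reachable_iff_reflTransGen] at h
  induction h with
  | refl => exact hx
  | tail _ hbc ih => exact hP hbc ih

namespace IsBorderWith

variable {G : SimpleGraph V} {B : Set (Sym2 V)} {P₁ P₂ : Set V}

theorem right_eq_compl (hB : IsBorderWith G B P₁ P₂) : P₂ = P₁ᶜ :=
  eq_compl_iff_isCompl.2 ⟨hB.disj.symm, codisjoint_iff.2 (by rw [sup_comm]; exact hB.cover)⟩

theorem left_subset_compl_vertexBorder (hB : IsBorderWith G B P₁ P₂) :
    P₁ ⊆ (vertexBorder B P₂)ᶜ :=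
  fun _ hv hvS => hB.disj.ne_of_mem hv hvS.1 rfl

theorem mem_left_of_adj (hB : IsBorderWith G B P₁ P₂) {a b : V} (hab : G.Adj a b)
    (ha : a ∈ P₁) (hb : b ∉ vertexBorder B P₂) : b ∈ P₁ := by
  by_contra hb₁
  have hb₂ : b ∈ P₂ := hB.right_eq_compl ▸ hb₁
  have hab_mem : s(a, b) ∈ B := hB.eq_edges ▸ ⟨hab, a, ha, b, hb₂, rfl⟩
  exact hb ⟨hb₂, s(a, b), hab_mem, Sym2.mem_mk_right a b⟩

theorem left_eq_reachable (hB : IsBorderWith G B P₁ P₂) {p : V} (hp : p ∈ P₁) :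
    P₁ = {q : V | ∃ (hpm : p ∈ (vertexBorder B P₂)ᶜ) (hqm : q ∈ (vertexBorder B P₂)ᶜ),
      (G.induce (vertexBorder B P₂)ᶜ).Reachable ⟨p, hpm⟩ ⟨q, hqm⟩} := by
  have hsub := hB.left_subset_compl_vertexBorder
  ext q
  constructor
  · intro hq
    let incl : G.induce P₁ →g G.induce (vertexBorder B P₂)ᶜ :=
      ⟨fun v => ⟨v.1, hsub v.2⟩, id⟩
    exact ⟨hsub hp, hsub hq, (hB.conn₁ ⟨p, hp⟩ ⟨q, hq⟩).map incl⟩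
  · rintro ⟨_, _, hr⟩
    exact hr.mem_of_adj_closed (P := Subtype.val ⁻¹' P₁)
      (fun a b hab ha => hB.mem_left_of_adj hab ha b.2) hp

theorem edges_eq_of_left_eq {B' : Set (Sym2 V)} {P₁' P₂' : Set V}
    (hB : IsBorderWith G B P₁ P₂) (hB' : IsBorderWith G B' P₁' P₂') (h : P₁ = P₁') :
    B = B' := by
  rw [hB.eq_edges, hB'.eq_edges, hB.right_eq_compl, hB'.right_eq_compl, h]

end IsBorderWith

theorem stmt_3_general {V : Type*} (G : SimpleGraph V) (p : V)
    (B B' : Set (Sym2 V)) (P₁ P₂ P₁' P₂' : Set V)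
    (hB : IsBorderWith G B P₁ P₂) (hB' : IsBorderWith G B' P₁' P₂')
    (hp : p ∈ P₁) (hp' : p ∈ P₁')
    (hS : vertexBorder B P₂ = vertexBorder B' P₂') :
    P₁ = P₁' ∧ B = B' ∧
    P₁ = {q : V | ∃ (hpm : p ∈ (vertexBorder B P₂)ᶜ) (hqm : q ∈ (vertexBorder B P₂)ᶜ),
      (G.induce (vertexBorder B P₂)ᶜ).Reachable ⟨p, hpm⟩ ⟨q, hqm⟩} := by
  have hP₁ : P₁ = P₁' := by
    rw [hB.left_eq_reachable hp, hB'.left_eq_reachable hp', hS]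
  exact ⟨hP₁, hB.edges_eq_of_left_eq hB' hP₁, hB.left_eq_reachable hp⟩

/-- a border is uniquely determined, given `p`, by its vertex border on
the side not containing `p`; moreover the side containing `p` is the connected
component of `p` in the graph obtained by deleting that vertex border. -/
theorem stmt_3 {V : Type*} (G : SimpleGraph V) (hG : G.Connected) (p : V)
    (B B' : Set (Sym2 V)) (P₁ P₂ P₁' P₂' : Set V)
    (hB : IsBorderWith G B P₁ P₂) (hB' : IsBorderWith G B' P₁' P₂')
    (hp : p ∈ P₁) (hp' : p ∈ P₁')
    (hS : vertexBorder B P₂ = vertexBorder B' P₂') :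
    P₁ = P₁' ∧ B = B' ∧
    P₁ = {q : V | ∃ (hpm : p ∈ (vertexBorder B P₂)ᶜ) (hqm : q ∈ (vertexBorder B P₂)ᶜ),
      (G.induce (vertexBorder B P₂)ᶜ).Reachable ⟨p, hpm⟩ ⟨q, hqm⟩} :=
  stmt_3_general G p B B' P₁ P₂ P₁' P₂' hB hB' hp hp' hS

end PG
end

section
/- Let G be a simple graph in which every vertex has degree at most z, where z ≥ 2, let p be a vertex of G, and let b ≥ 1 be an integer. Then the number of subsets A of the vertex set with |A| = b, p ∈ A, and A inducing a connected subgraph of G is at most Σ_{k=b−1}^{2zb} z^k = (z^{2zb+1} − z^{b−1})/(z − 1). In particular, the number of connected vertex sets of cardinality b containing a fixed vertex grows at most exponentially in b. -/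
open scoped BigOperators Classical

namespace PG

variable {V : Type*}

/-!
A finite connected vertex set `A` containing `p` is the vertex set of a closed walk at `p` of
length `2 (|A| - 1)`: delete a vertex `v` of `A` that leaves `A` connected, take such a walk of
`A \ {v}` based at a neighbour `u` of `v`, extend it by the edge `uv` at both ends and rotate it
to start at `p`. A walk is determined by its vertex sequence, and from `p` there are at most
`z ^ k` sequences of `k` further vertices along edges, so there are at most `z ^ (2 (b - 1))`
connected sets of size `b` containing `p`.
-/

theorem _root_.Nat.geomSum_Icc_eq {z : ℕ} (hz : 1 < z) {m n : ℕ} (hmn : m ≤ n + 1) :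
    ∑ k ∈ Finset.Icc m n, z ^ k = (z ^ (n + 1) - z ^ m) / (z - 1) := by
  refine (Nat.div_eq_of_eq_mul_left (by omega) ?_).symm
  have hpow : z ^ m ≤ z ^ (n + 1) := Nat.pow_le_pow_right (by omega) hmn
  zify [hpow, hz.le]
  rw [← Finset.Ico_add_one_right_eq_Icc]
  exact (geom_sum_Ico_mul (z : ℤ) hmn).symm

open SimpleGraph

theorem encard_setOf_isChain_cons_le (G : SimpleGraph V) {z : ℕ}
    (hdeg : ∀ v, (G.neighborSet v).encard ≤ z) (p : V) (n : ℕ) :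
    {l : List V | (p :: l).IsChain G.Adj ∧ l.length = n}.encard ≤ (z : ℕ∞) ^ n := by
  induction n generalizing p with
  | zero =>
    calc _ ≤ ({[]} : Set (List V)).encard :=
          Set.encard_le_encard fun l hl => List.length_eq_zero_iff.1 hl.2
      _ = _ := by simp
  | succ n ih =>
    have hN : (G.neighborSet p).Finite := Set.finite_of_encard_le_coe (hdeg p)
    set N := hN.toFinset
    calc _ ≤ (⋃ r ∈ N,
          List.cons r '' {l | (r :: l).IsChain G.Adj ∧ l.length = n}).encard := by
          refine Set.encard_le_encard ?_
          rintro (_ | ⟨r, l⟩) ⟨hchain, hlen⟩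
          · simp at hlen
          · rw [List.isChain_cons_cons] at hchain
            simp only [Set.mem_iUnion]
            exact ⟨r, hN.mem_toFinset.2 hchain.1, l, ⟨hchain.2, by simpa using hlen⟩, rfl⟩
      _ ≤ ∑ r ∈ N, (List.cons r '' {l | (r :: l).IsChain G.Adj ∧ l.length = n}).encard :=
          N.set_encard_biUnion_le _
      _ ≤ ∑ _r ∈ N, (z : ℕ∞) ^ n :=
          Finset.sum_le_sum fun r _ => (Set.encard_image_le _ _).trans (ih r)
      _ = (G.neighborSet p).encard * (z : ℕ∞) ^ n := by
          rw [Finset.sum_const, nsmul_eq_mul, hN.encard_eq_coe_toFinset_card]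
      _ ≤ (z : ℕ∞) ^ (n + 1) := by
          rw [pow_succ']
          gcongr
          exact hdeg p

theorem exists_connected_induce_diff_singleton {G : SimpleGraph V} {A : Set V} (hA : A.Finite)
    (hAnt : A.Nontrivial) (hconn : (G.induce A).Connected) :
    ∃ v ∈ A, (G.induce (A \ {v})).Connected := by
  have := hA.to_subtype
  have := hAnt.coe_sort
  obtain ⟨v, hv⟩ := hconn.exists_connected_induce_compl_singleton_of_finite_nontrivial
  let f : (G.induce A).induce {v}ᶜ →g G.induce (A \ {v.1}) :=
    { toFun := fun x => ⟨x.1.1, x.1.2, fun h => x.2 (Subtype.ext h)⟩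
      map_rel' := id }
  exact ⟨v, v.2, hv.map f fun y =>
    ⟨⟨⟨y.1, y.2.1⟩, fun h => y.2.2 (congrArg Subtype.val h)⟩, rfl⟩⟩

theorem exists_walk_support_eq_of_connected {G : SimpleGraph V} {A : Set V} (hA : A.Finite)
    (hconn : (G.induce A).Connected) {p : V} (hp : p ∈ A) :
    ∃ w : G.Walk p p, {x | x ∈ w.support} = A ∧ w.length = 2 * (A.ncard - 1) := by
  obtain ⟨n, hn⟩ : ∃ n, A.ncard = n + 1 :=
    Nat.exists_eq_add_one.2 ((Set.ncard_pos hA).2 ⟨p, hp⟩)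
  induction n generalizing A p with
  | zero =>
    obtain ⟨a, rfl⟩ := Set.ncard_eq_one.1 hn
    obtain rfl : p = a := hp
    exact ⟨Walk.nil, by simp, by simp⟩
  | succ n ih =>
    have hAnt : A.Nontrivial := (Set.one_lt_ncard_iff_nontrivial_and_finite.1 (by omega)).1
    have := hAnt.coe_sort
    obtain ⟨v, hvA, hconn'⟩ := exists_connected_induce_diff_singleton hA hAnt hconn
    obtain ⟨⟨u, huA⟩, hvu⟩ := hconn.preconnected.exists_adj_of_nontrivial ⟨v, hvA⟩
    replace hvu : G.Adj v u := hvu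
    have huv : u ∈ A \ {v} := ⟨huA, hvu.ne'⟩
    have hcard : (A \ {v}).ncard = n + 1 := by
      rw [Set.ncard_sdiff_singleton_of_mem hvA]; omega
    obtain ⟨w, hw, hlen⟩ := ih hA.sdiff hconn' huv hcard
    set c : G.Walk v v := .cons hvu (w.concat hvu.symm) with hc_def
    have hc : {x | x ∈ c.support} = A := by
      ext x
      have := Set.ext_iff.1 hw x
      simp only [Set.mem_ofPred_eq, Set.mem_sdiff, Set.mem_singleton_iff] at this
      simp only [hc_def, Walk.support_cons, Walk.support_concat, List.mem_cons,
        List.mem_append, Set.mem_ofPred_eq, this]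
      by_cases hx : x = v <;> simp [hx, hvA]
    refine ⟨c.rotate p (by rwa [← hc] at hp), by simpa using hc, ?_⟩
    simp only [Walk.length_rotate, hc_def, Walk.length_cons, Walk.length_concat, hlen, hcard, hn]
    omega

theorem encard_setOf_connected_le (G : SimpleGraph V) {z : ℕ}
    (hdeg : ∀ v, (G.neighborSet v).encard ≤ z) (p : V) (b : ℕ) :
    {A : Set V | A.Finite ∧ A.ncard = b ∧ p ∈ A ∧ (G.induce A).Connected}.encard ≤
      (z : ℕ∞) ^ (2 * (b - 1)) := by
  calc _ ≤ ((fun l => {x | x ∈ p :: l}) ''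
        {l : List V | (p :: l).IsChain G.Adj ∧ l.length = 2 * (b - 1)}).encard := by
        refine Set.encard_le_encard ?_
        rintro A ⟨hA, rfl, hp, hconn⟩
        obtain ⟨w, hw, hlen⟩ := exists_walk_support_eq_of_connected hA hconn hp
        refine ⟨w.support.tail, ⟨?_, by simp [hlen]⟩, ?_⟩
        · rw [w.cons_tail_support]
          exact w.isChain_adj_support
        · simpa only [w.cons_tail_support] using hw
    _ ≤ _ := (Set.encard_image_le _ _).trans (encard_setOf_isChain_cons_le G hdeg p _)

theorem stmt_10_general {V : Type*} (G : SimpleGraph V) (z : ℕ) (hz : 2 ≤ z)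
    (hdeg : ∀ v : V, (G.neighborSet v).Finite ∧ (G.neighborSet v).ncard ≤ z)
    (p : V) (b : ℕ) :
    {A : Set V | A.Finite ∧ A.ncard = b ∧ p ∈ A ∧ (G.induce A).Connected}.Finite ∧
    {A : Set V | A.Finite ∧ A.ncard = b ∧ p ∈ A ∧ (G.induce A).Connected}.ncard ≤
      ∑ k ∈ Finset.Icc (b - 1) (2 * z * b), z ^ k ∧
    ∑ k ∈ Finset.Icc (b - 1) (2 * z * b), z ^ k =
      (z ^ (2 * z * b + 1) - z ^ (b - 1)) / (z - 1) := by
  have hbound := encard_setOf_connected_le G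
    (fun v => Set.encard_le_coe_iff_finite_ncard_le.2 (hdeg v)) p b
  rw [← Nat.cast_pow, Set.encard_le_coe_iff_finite_ncard_le] at hbound
  have hexp : 2 * (b - 1) ≤ 2 * z * b := by
    have : 2 * 2 * b ≤ 2 * z * b := by gcongr
    omega
  refine ⟨hbound.1, hbound.2.trans ?_, Nat.geomSum_Icc_eq hz (by omega)⟩
  exact Finset.single_le_sum (f := (z ^ ·)) (fun _ _ => Nat.zero_le _)
    (Finset.mem_Icc.2 ⟨by omega, hexp⟩)

/-- in a graph of maximum degree at most `z ≥ 2`, the number of connected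
vertex sets of cardinality `b` containing a fixed vertex `p` is at most
`Σ_{k=b−1}^{2zb} z^k = (z^{2zb+1} − z^{b−1})/(z−1)`: it grows at most exponentially. -/
theorem stmt_10 {V : Type*} (G : SimpleGraph V) (z : ℕ) (hz : 2 ≤ z)
    (hdeg : ∀ v : V, (G.neighborSet v).Finite ∧ (G.neighborSet v).ncard ≤ z)
    (p : V) (b : ℕ) (hb : 1 ≤ b) :
    {A : Set V | A.Finite ∧ A.ncard = b ∧ p ∈ A ∧ (G.induce A).Connected}.Finite ∧
    {A : Set V | A.Finite ∧ A.ncard = b ∧ p ∈ A ∧ (G.induce A).Connected}.ncard ≤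
      ∑ k ∈ Finset.Icc (b - 1) (2 * z * b), z ^ k ∧
    ∑ k ∈ Finset.Icc (b - 1) (2 * z * b), z ^ k =
      (z ^ (2 * z * b + 1) - z ^ (b - 1)) / (z - 1) :=
  stmt_10_general G z hz hdeg p b

end PG
end
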